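/- Let W : (0,∞) → Mat(N,ℂ) be twice differentiable and satisfy z·W'(z) = h^L(z)·W(z) + W(z)·h^R(z). With a^R := 2h^R + I_N and b^L := 𝒩(h^L), b^R := 𝒩(h^R), it holds that (z·W)'' − (W·a^R)' + W·b^R = b^L·W. -/

import Mathlib

/-!
Differentiating the Pearson equation `z W' = h^L W + W h^R` gives
`W' + z W'' = (h^L)' W + h^L W' + W' h^R + W (h^R)'`, which eliminates `z W''` from
`(zW)'' = 2W' + zW''`. What is left is `h^L W' - W' h^R`, and multiplying it by `z` and using the
Pearson equation once more turns it into `(h^L)² W - W (h^R)²`: the cross terms `h^L W h^R` cancel.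
-/

/-- Entrywise derivative of a matrix-valued function of a real variable. -/
noncomputable def RDeriv {N : ℕ} (W : ℝ → Matrix (Fin N) (Fin N) ℂ) (t : ℝ) :
    Matrix (Fin N) (Fin N) ℂ :=
  Matrix.of fun i j => deriv (fun s => W s i j) t

open Topology

theorem pearson_second_order_of_derivatives {A : Type*} [Ring A] [Algebra ℝ A] {z : ℝ}
    (hz : z ≠ 0) {w w' w'' l l' r r' : A}
    (hpearson : z • w' = l * w + w * r)
    (hpearson' : w' + z • w'' = l' * w + l * w' + (w' * r + w * r')) :
    2 • w' + z • w'' - (w' * (2 • r + 1) + w * 2 • r') + w * (r' + z⁻¹ • (r * r))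
      = (l' + z⁻¹ • (l * l)) * w := by
  have hw' : w' = z⁻¹ • (l * w + w * r) := by rw [← hpearson, inv_smul_smul₀ hz]
  have hzw'' : z • w'' = l' * w + l * w' + (w' * r + w * r') - w' := by
    rw [← hpearson']; abel
  rw [hzw'', hw']
  simp only [mul_add, add_mul, smul_mul_assoc, mul_smul_comm, smul_add, mul_one, two_nsmul,
    mul_assoc]
  abel

section RDeriv

variable {N : ℕ}

def EntrywiseDifferentiableAt (F : ℝ → Matrix (Fin N) (Fin N) ℂ) (t : ℝ) : Prop :=
  ∀ i j, DifferentiableAt ℝ (fun s => F s i j) t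

namespace EntrywiseDifferentiableAt

variable {F G : ℝ → Matrix (Fin N) (Fin N) ℂ} {t : ℝ}

theorem add (hF : EntrywiseDifferentiableAt F t) (hG : EntrywiseDifferentiableAt G t) :
    EntrywiseDifferentiableAt (fun s => F s + G s) t :=
  fun i j => (hF i j).add (hG i j)

theorem mul (hF : EntrywiseDifferentiableAt F t) (hG : EntrywiseDifferentiableAt G t) :
    EntrywiseDifferentiableAt (fun s => F s * G s) t := fun i j => by
  simp only [Matrix.mul_apply]
  exact DifferentiableAt.fun_sum fun k _ => (hF i k).mul (hG k j)

theorem id_smul (hF : EntrywiseDifferentiableAt F t) :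
    EntrywiseDifferentiableAt (fun s => s • F s) t :=
  fun i j => differentiableAt_fun_id.smul (hF i j)

theorem const_smul (c : ℂ) (hF : EntrywiseDifferentiableAt F t) :
    EntrywiseDifferentiableAt (fun s => c • F s) t :=
  fun i j => (hF i j).const_smul c

theorem add_const (C : Matrix (Fin N) (Fin N) ℂ) (hF : EntrywiseDifferentiableAt F t) :
    EntrywiseDifferentiableAt (fun s => F s + C) t :=
  fun i j => (hF i j).add_const (C i j)

end EntrywiseDifferentiableAt

variable {F G : ℝ → Matrix (Fin N) (Fin N) ℂ} {z : ℝ}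

theorem rderiv_congr (h : F =ᶠ[𝓝 z] G) : RDeriv F z = RDeriv G z := by
  ext i j
  exact Filter.EventuallyEq.deriv_eq <| h.mono fun t ht => congrArg (fun M => M i j) ht

theorem rderiv_add (hF : EntrywiseDifferentiableAt F z) (hG : EntrywiseDifferentiableAt G z) :
    RDeriv (fun t => F t + G t) z = RDeriv F z + RDeriv G z := by
  ext i j
  exact deriv_add (hF i j) (hG i j)

theorem rderiv_mul (hF : EntrywiseDifferentiableAt F z) (hG : EntrywiseDifferentiableAt G z) :
    RDeriv (fun t => F t * G t) z = RDeriv F z * G z + F z * RDeriv G z := by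
  ext i j
  simp only [RDeriv, Matrix.of_apply, Matrix.add_apply, Matrix.mul_apply]
  rw [deriv_fun_sum fun k _ => (hF i k).fun_mul (hG k j), ← Finset.sum_add_distrib]
  exact Finset.sum_congr rfl fun k _ => deriv_fun_mul (hF i k) (hG k j)

theorem rderiv_id_smul (hF : EntrywiseDifferentiableAt F z) :
    RDeriv (fun t => t • F t) z = F z + z • RDeriv F z := by
  ext i j
  simp only [RDeriv, Matrix.of_apply, Matrix.add_apply, Matrix.smul_apply]
  rw [deriv_fun_smul differentiableAt_fun_id (hF i j)]
  simp [add_comm]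

theorem rderiv_const_smul (c : ℂ) (hF : EntrywiseDifferentiableAt F z) :
    RDeriv (fun t => c • F t) z = c • RDeriv F z := by
  ext i j
  exact deriv_fun_const_smul c (hF i j)

theorem rderiv_add_const (C : Matrix (Fin N) (Fin N) ℂ) :
    RDeriv (fun t => F t + C) z = RDeriv F z := by
  ext i j
  exact deriv_add_const (C i j)

theorem rderiv_rderiv_id_smul (hF : ∀ᶠ t in 𝓝 z, EntrywiseDifferentiableAt F t)
    (hF' : EntrywiseDifferentiableAt (RDeriv F) z) :
    RDeriv (RDeriv (fun t => t • F t)) z = 2 • RDeriv F z + z • RDeriv (RDeriv F) z := by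
  rw [rderiv_congr (hF.mono fun t ht => rderiv_id_smul ht),
    rderiv_add hF.self_of_nhds hF'.id_smul, rderiv_id_smul hF', two_nsmul, add_assoc]

end RDeriv

/-- If `W` satisfies the Pearson equation `z W' = h^L W + W h^R` on `(0,∞)`, then with
`a^R = 2h^R + I`, `b^L = (h^L)' + (h^L)²/z`, `b^R = (h^R)' + (h^R)²/z`, one has
`(zW)'' − (W a^R)' + W b^R = b^L W`. -/
theorem stmt_10 (N : ℕ)
    (W hL hR : ℝ → Matrix (Fin N) (Fin N) ℂ)
    (hWdiff : ∀ t > (0:ℝ), ∀ i j, DifferentiableAt ℝ (fun s => W s i j) t)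
    (hWdiff2 : ∀ t > (0:ℝ), ∀ i j, DifferentiableAt ℝ (fun s => RDeriv W s i j) t)
    (hhLdiff : ∀ t > (0:ℝ), ∀ i j, DifferentiableAt ℝ (fun s => hL s i j) t)
    (hhRdiff : ∀ t > (0:ℝ), ∀ i j, DifferentiableAt ℝ (fun s => hR s i j) t)
    (hPearson : ∀ t > (0:ℝ), t • RDeriv W t = hL t * W t + W t * hR t) :
    ∀ z > (0:ℝ),
      RDeriv (RDeriv (fun t => t • W t)) z
        - RDeriv (fun t => W t * ((2:ℂ) • hR t + 1)) z
        + W z * (RDeriv hR z + z⁻¹ • (hR z * hR z))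
      = (RDeriv hL z + z⁻¹ • (hL z * hL z)) * W z := by
  intro z hz
  have hnear : ∀ᶠ t in 𝓝 z, 0 < t := Ioi_mem_nhds hz
  have hWz : EntrywiseDifferentiableAt W z := hWdiff z hz
  have hLz : EntrywiseDifferentiableAt hL z := hhLdiff z hz
  have hRz : EntrywiseDifferentiableAt hR z := hhRdiff z hz
  have hPearsonDeriv : RDeriv W z + z • RDeriv (RDeriv W) z
      = RDeriv hL z * W z + hL z * RDeriv W z + (RDeriv W z * hR z + W z * RDeriv hR z) := by
    rw [← rderiv_id_smul (hWdiff2 z hz), rderiv_congr (hnear.mono hPearson),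
      rderiv_add (hLz.mul hWz) (hWz.mul hRz), rderiv_mul hLz hWz, rderiv_mul hWz hRz]
  rw [rderiv_rderiv_id_smul (hnear.mono hWdiff) (hWdiff2 z hz),
    rderiv_mul hWz ((hRz.const_smul 2).add_const 1), rderiv_add_const, rderiv_const_smul 2 hRz]
  simp only [ofNat_smul_eq_nsmul (R := ℂ)]
  exact pearson_second_order_of_derivatives hz.ne' (hPearson z hz) hPearsonDeriv
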